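/- Let γ ∈ (0,1), n ≥ 1, q ∈ [0,1), and τ ≥ 0. Let X = (X_1, …, X_n) be a standard Gaussian vector with law N(0, I_n) on a probability space (Ω, P) and let Δ = (Δ_1, …, Δ_n) be a random vector independent of X with |Δ_i| ≤ q almost surely for every i. Then P(|∑_{i=1}^n (1 + Δ_i + X_i)| > √n · λ_γ(τ√n)) ≥ 2 − Φ(λ_γ(τ√n) − (1 − q)√n) − Φ(λ_γ(τ√n) + (1 − q)√n). (Lower bound on the detection probability of the RDT decision.) -/

import Mathlib

open MeasureTheory ProbabilityTheory Real Filter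

open scoped NNReal ENNReal

/-! Write the statistic as `M + S` with `M = ∑ (1 + Δᵢ)` and `S = ∑ Xᵢ`. Then `S ~ N(0, n)` is
independent of `M`, so conditionally on `M = m` the detection probability is
`2 - Φ(λ - m/√n) - Φ(λ + m/√n)`. For `λ ≥ 0` this is increasing in `m ≥ 0`, and `m ≥ n(1 - q)`
almost surely. Finally `λ ≥ 0` because for `λ < 0` the level would be at least `1`. -/

/-- The cumulative distribution function `Φ` of the standard normal law `N(0,1)`. -/
noncomputable def Phi (x : ℝ) : ℝ := ((gaussianReal 0 1) (Set.Iic x)).toReal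

/-- The inverse `Φ⁻¹` of the standard normal cdf (on `(0,1)`). -/
noncomputable def PhiInv (y : ℝ) : ℝ := Function.invFun Phi y

open Set

instance : NullSingletonClass (gaussianReal 0 1) := nullSingletonClass_gaussianReal one_ne_zero

lemma Phi_eq_cdf (x : ℝ) : Phi x = cdf (gaussianReal 0 1) x := by
  rw [cdf_eq_real]; rfl

lemma Phi_mono : Monotone Phi := fun x y h => by
  simpa only [Phi_eq_cdf] using monotone_cdf _ h

lemma Phi_nonneg (x : ℝ) : 0 ≤ Phi x := ENNReal.toReal_nonneg

lemma Phi_le_one (x : ℝ) : Phi x ≤ 1 := by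
  rw [Phi_eq_cdf]; exact cdf_le_one _ x

lemma gaussianReal_Iic (x : ℝ) : gaussianReal 0 1 (Iic x) = ENNReal.ofReal (Phi x) := by
  rw [Phi_eq_cdf, ofReal_cdf]

lemma gaussianReal_Iio (x : ℝ) : gaussianReal 0 1 (Iio x) = ENNReal.ofReal (Phi x) := by
  rw [measure_congr Iio_ae_eq_Iic, gaussianReal_Iic]

lemma gaussianReal_Ioi (x : ℝ) : gaussianReal 0 1 (Ioi x) = ENNReal.ofReal (1 - Phi x) := by
  rw [← compl_Iic, prob_compl_eq_one_sub measurableSet_Iic, gaussianReal_Iic, ← ENNReal.ofReal_one,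
    ENNReal.ofReal_sub _ (Phi_nonneg x)]

lemma Phi_neg (x : ℝ) : Phi (-x) = 1 - Phi x := by
  have h : gaussianReal 0 1 (Iic (-x)) = gaussianReal 0 1 (Ioi x) := by
    conv_lhs => rw [← neg_zero, ← gaussianReal_map_neg]
    rw [Measure.map_apply measurable_neg measurableSet_Iic, measure_congr Ioi_ae_eq_Ici]
    congr 1
    ext y
    simp
  rw [gaussianReal_Iic, gaussianReal_Ioi] at h
  exact (ENNReal.ofReal_eq_ofReal_iff (Phi_nonneg _) (sub_nonneg.2 (Phi_le_one x))).1 h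

lemma Phi_sub_Phi_eq_integral {u v : ℝ} (h : u ≤ v) :
    Phi v - Phi u = ∫ x in u..v, gaussianPDFReal 0 1 x := by
  have hIoc := (cdf (gaussianReal 0 1)).measure_Ioc u v
  rw [measure_cdf, gaussianReal_apply_eq_integral _ one_ne_zero,
    ← intervalIntegral.integral_of_le h, ← Phi_eq_cdf, ← Phi_eq_cdf] at hIoc
  refine ((ENNReal.ofReal_eq_ofReal_iff ?_ ?_).1 hIoc).symm
  · exact intervalIntegral.integral_nonneg h fun x _ => gaussianPDFReal_nonneg 0 1 x
  · exact sub_nonneg.2 (Phi_mono h)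

lemma nonneg_of_two_sub_Phi_sub_Phi_lt_one {lam b : ℝ}
    (h : 2 - Phi (lam - b) - Phi (lam + b) < 1) : 0 ≤ lam := by
  by_contra! hneg
  have h₁ : Phi (lam - b) ≤ Phi (-b) := Phi_mono (by linarith)
  have h₂ : Phi (lam + b) ≤ Phi b := Phi_mono (by linarith)
  linarith [Phi_neg b]

lemma gaussianPDFReal_le_of_abs_le {μ : ℝ} {v : ℝ≥0} {x y : ℝ} (h : |y - μ| ≤ |x - μ|) :
    gaussianPDFReal μ v x ≤ gaussianPDFReal μ v y := by
  rw [gaussianPDFReal, gaussianPDFReal]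
  refine mul_le_mul_of_nonneg_left (exp_le_exp.2 ?_) (by positivity)
  rw [neg_div, neg_div, neg_le_neg_iff]
  exact div_le_div_of_nonneg_right (sq_le_sq.2 h) (by positivity)

lemma continuous_gaussianPDFReal (μ : ℝ) (v : ℝ≥0) : Continuous (gaussianPDFReal μ v) := by
  rw [gaussianPDFReal_def]
  fun_prop

/-- Reflecting `[lam + A, lam + a]` about `lam ≥ 0` gives `[lam - a, lam - A]`, which lies closer
to the origin, where the Gaussian density is larger. -/
lemma antitoneOn_Phi_sub_add_Phi_add {lam : ℝ} (hlam : 0 ≤ lam) :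
    AntitoneOn (fun a => Phi (lam - a) + Phi (lam + a)) (Ici 0) := by
  intro A hA a _ hAa
  suffices Phi (lam + a) - Phi (lam + A) ≤ Phi (lam - A) - Phi (lam - a) by
    dsimp only; linarith
  calc Phi (lam + a) - Phi (lam + A)
      = ∫ x in lam + A..lam + a, gaussianPDFReal 0 1 x := Phi_sub_Phi_eq_integral (by linarith)
    _ ≤ ∫ x in lam + A..lam + a, gaussianPDFReal 0 1 (2 * lam - x) := by
        refine intervalIntegral.integral_mono_on (by linarith)
          (integrable_gaussianPDFReal 0 1).intervalIntegrable
          (((continuous_gaussianPDFReal 0 1).comp (continuous_sub_left _)).intervalIntegrable _ _)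
          fun x hx => gaussianPDFReal_le_of_abs_le ?_
        have : lam ≤ x := by linarith [hx.1, mem_Ici.1 hA]
        rw [sub_zero, sub_zero, abs_of_nonneg (by linarith : 0 ≤ x)]
        exact abs_le.2 ⟨by linarith, by linarith⟩
    _ = ∫ x in lam - a..lam - A, gaussianPDFReal 0 1 x := by
        rw [intervalIntegral.integral_comp_sub_left (gaussianPDFReal 0 1) (2 * lam)]
        ring_nf
    _ = Phi (lam - A) - Phi (lam - a) := (Phi_sub_Phi_eq_integral (by linarith)).symm

lemma gaussianReal_setOf_lt_abs_add {lam : ℝ} (hlam : 0 ≤ lam) (a : ℝ) :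
    gaussianReal 0 1 {z | lam < |a + z|} = ENNReal.ofReal (2 - Phi (lam - a) - Phi (lam + a)) := by
  have hunion : {z | lam < |a + z|} = Ioi (lam - a) ∪ Iio (-(lam + a)) := by
    ext z
    simp only [mem_ofPred_eq, mem_union, mem_Ioi, mem_Iio, lt_abs]
    constructor <;> rintro (h | h) <;> [left; right; left; right] <;> linarith
  have hdisj : Disjoint (Ioi (lam - a)) (Iio (-(lam + a))) :=
    disjoint_left.2 fun z h₁ h₂ => by rw [mem_Ioi] at h₁; rw [mem_Iio] at h₂; linarith
  rw [hunion, measure_union hdisj measurableSet_Iio, gaussianReal_Ioi, gaussianReal_Iio, Phi_neg,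
    ← ENNReal.ofReal_add (sub_nonneg.2 (Phi_le_one _)) (sub_nonneg.2 (Phi_le_one _))]
  ring_nf

lemma gaussianReal_map_sqrt_mul (v : ℝ≥0) :
    (gaussianReal 0 1).map (√(v : ℝ) * ·) = gaussianReal 0 v := by
  rw [gaussianReal_map_const_mul, mul_zero]
  congr
  ext
  simp

lemma ofReal_two_sub_Phi_sub_Phi_le_gaussianReal {v : ℝ≥0} (hv : v ≠ 0) {lam A m : ℝ}
    (hlam : 0 ≤ lam) (hA : 0 ≤ A) (hm : A * √(v : ℝ) ≤ m) :
    ENNReal.ofReal (2 - Phi (lam - A) - Phi (lam + A)) ≤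
      gaussianReal 0 v {s | √(v : ℝ) * lam < |m + s|} := by
  set σ := √(v : ℝ)
  have hσ : 0 < σ := sqrt_pos.2 (by positivity)
  have hpre : (σ * ·) ⁻¹' {s | σ * lam < |m + s|} = {z | lam < |m / σ + z|} := by
    ext z
    rw [mem_preimage, mem_ofPred_eq, mem_ofPred_eq,
      show m + σ * z = σ * (m / σ + z) by field_simp, abs_mul, abs_of_pos hσ,
      mul_lt_mul_iff_right₀ hσ]
  rw [← gaussianReal_map_sqrt_mul, Measure.map_apply (measurable_const_mul σ)
    (measurableSet_lt measurable_const (by fun_prop)), hpre, gaussianReal_setOf_lt_abs_add hlam]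
  refine ENNReal.ofReal_le_ofReal ?_
  have := antitoneOn_Phi_sub_add_Phi_add hlam (mem_Ici.2 hA)
    (mem_Ici.2 (hA.trans ((le_div_iff₀ hσ).2 hm))) ((le_div_iff₀ hσ).2 hm)
  dsimp only at this
  linarith

namespace ProbabilityTheory

lemma iIndepFun.map_sum_eq_gaussianReal {Ω ι : Type*} [MeasurableSpace Ω] {P : Measure Ω}
    [IsProbabilityMeasure P] {X : ι → Ω → ℝ} (hmeas : ∀ i, Measurable (X i))
    (hindep : iIndepFun X P) {μ : ι → ℝ} {v : ι → ℝ≥0}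
    (hdist : ∀ i, P.map (X i) = gaussianReal (μ i) (v i)) (s : Finset ι) :
    P.map (∑ i ∈ s, X i) = gaussianReal (∑ i ∈ s, μ i) (∑ i ∈ s, v i) := by
  classical
  induction s using Finset.induction with
  | empty =>
    rw [Finset.sum_empty, Finset.sum_empty, Finset.sum_empty, gaussianReal_zero_var]
    exact (Measure.map_const P 0).trans (by simp)
  | insert i s hi ih =>
    rw [Finset.sum_insert hi, Finset.sum_insert hi, Finset.sum_insert hi, add_comm (X i),
      add_comm (μ i), add_comm (v i)]
    exact gaussianReal_add_gaussianReal_of_indepFun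
      (hindep.indepFun_finsetSum_of_notMem hmeas hi) ih (hdist i)

lemma IndepFun.measure_mem_eq_lintegral {Ω α β : Type*} [MeasurableSpace Ω] [MeasurableSpace α]
    [MeasurableSpace β] {P : Measure Ω} [IsFiniteMeasure P] {M : Ω → α} {S : Ω → β}
    (hMS : IndepFun M S P) (hM : Measurable M) (hS : Measurable S) {B : Set (α × β)}
    (hB : MeasurableSet B) :
    P {ω | (M ω, S ω) ∈ B} = ∫⁻ m, P.map S (Prod.mk m ⁻¹' B) ∂P.map M := by
  rw [← Measure.prod_apply hB, ← (indepFun_iff_map_prod_eq_prod_map_map hM.aemeasurable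
    hS.aemeasurable).1 hMS, Measure.map_apply (hM.prodMk hS) hB]
  rfl

end ProbabilityTheory

theorem stmt10_general {Ω : Type*} [MeasurableSpace Ω] (P : Measure Ω) [IsProbabilityMeasure P]
    (γ q τ : ℝ) (hγ : γ ∈ Set.Ioo (0 : ℝ) 1) (hq : q ∈ Set.Ico (0 : ℝ) 1)
    (n : ℕ) (hn : 1 ≤ n)
    (X : Fin n → Ω → ℝ) (hmeas : ∀ i, Measurable (X i))
    (hindep : iIndepFun X P)
    (hdist : ∀ i, Measure.map (X i) P = gaussianReal 0 1)
    (Δ : Ω → Fin n → ℝ) (hΔmeas : Measurable Δ)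
    (hΔX : IndepFun Δ (fun ω i => X i ω) P)
    (hΔbnd : ∀ i, ∀ᵐ ω ∂P, |Δ ω i| ≤ q)
    (lam : ℝ)
    (hlam : 2 - Phi (lam - τ * Real.sqrt n) - Phi (lam + τ * Real.sqrt n) = γ) :
    ENNReal.ofReal
        (2 - Phi (lam - (1 - q) * Real.sqrt n) - Phi (lam + (1 - q) * Real.sqrt n)) ≤
      P {ω | Real.sqrt n * lam < |∑ i, (1 + Δ ω i + X i ω)|} := by
  have hlam0 : 0 ≤ lam := nonneg_of_two_sub_Phi_sub_Phi_lt_one (hlam ▸ hγ.2)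
  set M : Ω → ℝ := fun ω => ∑ i, (1 + Δ ω i)
  set S : Ω → ℝ := fun ω => ∑ i, X i ω
  have hM : Measurable M := by fun_prop
  have hS : Measurable S := by fun_prop
  have hSlaw : P.map S = gaussianReal 0 n := by
    have := hindep.map_sum_eq_gaussianReal hmeas hdist Finset.univ
    rw [Finset.sum_fn] at this
    simpa using this
  have hMS : IndepFun M S P :=
    hΔX.comp (φ := fun d : Fin n → ℝ => ∑ i, (1 + d i)) (ψ := fun x : Fin n → ℝ => ∑ i, x i)
      (by fun_prop) (by fun_prop)
  have hMbound : ∀ᵐ m ∂P.map M, (1 - q) * √n * √n ≤ m := by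
    rw [ae_map_iff hM.aemeasurable measurableSet_Ici]
    filter_upwards [ae_all_iff.2 hΔbnd] with ω hω
    calc (1 - q) * √n * √n = ∑ _i : Fin n, (1 - q) := by
          rw [Finset.sum_const, Finset.card_univ, Fintype.card_fin, nsmul_eq_mul, mul_assoc,
            mul_self_sqrt (Nat.cast_nonneg n), mul_comm]
      _ ≤ M ω := Finset.sum_le_sum fun i _ => by linarith [neg_abs_le (Δ ω i), hω i]
  have hevent : {ω | √n * lam < |∑ i, (1 + Δ ω i + X i ω)|}
      = {ω | (M ω, S ω) ∈ {p : ℝ × ℝ | √n * lam < |p.1 + p.2|}} := by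
    ext ω
    simp [M, S, Finset.sum_add_distrib]
  have : IsProbabilityMeasure (P.map M) := Measure.isProbabilityMeasure_map hM.aemeasurable
  rw [hevent, hMS.measure_mem_eq_lintegral hM hS
    (measurableSet_lt measurable_const (by fun_prop)), hSlaw]
  calc _ = ∫⁻ _, ENNReal.ofReal
        (2 - Phi (lam - (1 - q) * √n) - Phi (lam + (1 - q) * √n)) ∂P.map M := by simp
    _ ≤ _ := lintegral_mono_ae <| hMbound.mono fun m hm => by
        simpa using ofReal_two_sub_Phi_sub_Phi_le_gaussianReal (v := n)
          (Nat.cast_ne_zero.2 (by omega)) hlam0 (mul_nonneg (by linarith [hq.2]) (sqrt_nonneg _))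
          (by simpa using hm)

/-- lower bound on the detection probability of the RDT decision. -/
theorem stmt10 {Ω : Type*} [MeasurableSpace Ω] (P : Measure Ω) [IsProbabilityMeasure P]
    (γ q τ : ℝ) (hγ : γ ∈ Set.Ioo (0 : ℝ) 1) (hq : q ∈ Set.Ico (0 : ℝ) 1) (hτ : 0 ≤ τ)
    (n : ℕ) (hn : 1 ≤ n)
    (X : Fin n → Ω → ℝ) (hmeas : ∀ i, Measurable (X i))
    (hindep : iIndepFun X P)
    (hdist : ∀ i, Measure.map (X i) P = gaussianReal 0 1)
    (Δ : Ω → Fin n → ℝ) (hΔmeas : Measurable Δ)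
    (hΔX : IndepFun Δ (fun ω i => X i ω) P)
    (hΔbnd : ∀ i, ∀ᵐ ω ∂P, |Δ ω i| ≤ q)
    (lam : ℝ)
    (hlam : 2 - Phi (lam - τ * Real.sqrt n) - Phi (lam + τ * Real.sqrt n) = γ) :
    ENNReal.ofReal
        (2 - Phi (lam - (1 - q) * Real.sqrt n) - Phi (lam + (1 - q) * Real.sqrt n)) ≤
      P {ω | Real.sqrt n * lam < |∑ i, (1 + Δ ω i + X i ω)|} :=
  stmt10_general P γ q τ hγ hq n hn X hmeas hindep hdist Δ hΔmeas hΔX hΔbnd lam hlam
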